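/- arXiv:2510.22501 — 2 statements merged into one kernel-verified Lean document; each statement's English description precedes it below -/
import Mathlib

section
/- Let P ⊆ {1,…,n}×{1,…,n} and let q ∈ (0,1]ⁿ satisfy δ_i ≤ δ'_i + (1 − 1/q_i)·ω_i for every i. If ρ(M_{−P}(q)) < 1, then for the SDIR dynamics run with B replaced by B_{−P}, the infection amount satisfies sup_{t≥0} ‖m(t) − m(0)‖₁ ≤ σ^U(P) = 1ᵀ·(A + Q(I − A))^{−1}·(D·(I − M_{−P}(q))^{−1} − I)·(x(0) + Q·y(0)). (Theorem 2: supermodular upper bound on the infection amount after deleting the edge set P.) -/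
/-!
Since `δ ≤ δ' + (1 - 1/q) ω`, the matrix `C(q)` is `D`, so `M = I - D + G S₀ B` with
`G = A + Q (I - A)`. The weighted state `z = x + Q y` is a subsolution of `M`:
`z (t+1) ≤ M z t` (this is exactly where the condition on `q` enters), hence
`x t ≤ z t ≤ Mᵗ z 0`. The total `m` grows in each step by exactly the new infections
`S₀ B x t ≥ 0`, so `m t - m 0 ≤ S₀ B ∑_{u<t} Mᵘ z 0 ≤ S₀ B (I - M)⁻¹ z 0`, where the
Neumann series converges because `ρ(M) < 1` (Gelfand's formula). Finally
`G⁻¹ (D (I - M)⁻¹ - I) = S₀ B (I - M)⁻¹` because `D - (I - M) = G S₀ B`.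
-/

open Matrix Filter Finset

/-- Spectral radius of a real square matrix: the maximum modulus of its complex
eigenvalues (elements of the spectrum of the matrix viewed over `ℂ`). -/
noncomputable def specRad {n : ℕ} (M : Matrix (Fin n) (Fin n) ℝ) : ℝ :=
  sSup {r : ℝ | ∃ μ : ℂ, μ ∈ spectrum ℂ (M.map (Complex.ofReal)) ∧ r = ‖μ‖}

/-- The matrix `B` with the entries indexed by the edge set `P` deleted (set to `0`). -/
def Bdel {n : ℕ} (B : Matrix (Fin n) (Fin n) ℝ) (P : Finset (Fin n × Fin n)) :
    Matrix (Fin n) (Fin n) ℝ :=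
  Matrix.of fun i j => if (i, j) ∈ P then 0 else B i j

theorem summable_norm_pow_of_spectralRadius_lt_one {A : Type*} [NormedRing A]
    [NormedAlgebra ℂ A] [CompleteSpace A] {a : A} (h : spectralRadius ℂ a < 1) :
    Summable (fun k => ‖a ^ k‖) := by
  obtain ⟨c, hac, hc1⟩ := ENNReal.lt_iff_exists_nnreal_btwn.mp h
  have hgeom : Summable (fun k => (c : ℝ) ^ k) :=
    summable_geometric_of_lt_one c.coe_nonneg (by exact_mod_cast hc1)
  refine .of_norm_bounded_eventually_nat hgeom ?_
  have hgelfand := spectrum.pow_nnnorm_pow_one_div_tendsto_nhds_spectralRadius a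
  filter_upwards [hgelfand.eventually_lt_const hac, eventually_ne_atTop 0] with k hk hk0
  rw [one_div, ENNReal.rpow_inv_lt_iff (by positivity), ENNReal.rpow_natCast] at hk
  rw [norm_norm]
  exact_mod_cast hk.le

theorem mul_neg_geom_series_of_summable {R : Type*} [Ring R] [TopologicalSpace R]
    [IsTopologicalRing R] [T2Space R] {a : R} (h : Summable (a ^ ·)) :
    (1 - a) * ∑' k, a ^ k = 1 := by
  have hlim := h.hasSum.tendsto_sum_nat.const_mul (1 - a)
  simp_rw [mul_neg_geom_sum] at hlim
  exact tendsto_nhds_unique hlim (by simpa using h.tendsto_atTop_zero.const_sub 1)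

namespace Matrix

section Order

variable {ι R : Type*} [Fintype ι] [Semiring R] [PartialOrder R] [IsOrderedRing R]
  {M : Matrix ι ι R}

theorem mulVec_mono_of_nonneg (hM : ∀ i j, 0 ≤ M i j) {v w : ι → R} (h : v ≤ w) :
    M *ᵥ v ≤ M *ᵥ w :=
  fun i => Finset.sum_le_sum fun j _ => mul_le_mul_of_nonneg_left (h j) (hM i j)

theorem mulVec_nonneg_of_nonneg (hM : ∀ i j, 0 ≤ M i j) {v : ι → R} (hv : 0 ≤ v) :
    0 ≤ M *ᵥ v := by
  simpa using mulVec_mono_of_nonneg hM hv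

variable [DecidableEq ι]

theorem pow_mulVec_nonneg (hM : ∀ i j, 0 ≤ M i j) {v : ι → R} (hv : 0 ≤ v) (k : ℕ) :
    0 ≤ M ^ k *ᵥ v := by
  induction k with
  | zero => simpa using hv
  | succ k ih => rw [pow_succ', ← mulVec_mulVec]; exact mulVec_nonneg_of_nonneg hM ih

theorem le_pow_mulVec_of_le_mulVec (hM : ∀ i j, 0 ≤ M i j) {z : ℕ → ι → R}
    (hz : ∀ u, z (u + 1) ≤ M *ᵥ z u) (u : ℕ) : z u ≤ M ^ u *ᵥ z 0 := by
  induction u with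
  | zero => simp
  | succ u ih =>
    rw [pow_succ', ← mulVec_mulVec]
    exact (hz u).trans (mulVec_mono_of_nonneg hM ih)

theorem diagonal_mul_nonneg {c : ι → R} (hc : ∀ i, 0 ≤ c i) (hM : ∀ i j, 0 ≤ M i j)
    (i j : ι) :
    0 ≤ (diagonal c * M) i j := by
  rw [diagonal_mul]; exact mul_nonneg (hc i) (hM i j)

end Order

theorem one_sub_diagonal_add_diagonal_mul_nonneg {ι R : Type*} [Fintype ι] [DecidableEq ι]
    [Ring R] [PartialOrder R] [IsOrderedRing R] {d c : ι → R} {M : Matrix ι ι R}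
    (hd : ∀ i, d i ≤ 1) (hc : ∀ i, 0 ≤ c i) (hM : ∀ i j, 0 ≤ M i j) (i j : ι) :
    0 ≤ (1 - diagonal d + diagonal c * M) i j := by
  have hcM := diagonal_mul_nonneg hc hM i j
  rw [add_apply, sub_apply, one_apply, diagonal_apply]
  split_ifs
  · exact add_nonneg (sub_nonneg.mpr (hd i)) hcM
  · simpa using hcM

section Algebra

variable {ι K : Type*} [Fintype ι] [DecidableEq ι] [CommRing K]

theorem inv_mul_mul_inv_one_sub_sub_one {G D F M : Matrix ι ι K} (hM : M = 1 - D + G * F)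
    (hG : IsUnit G.det) (h1M : IsUnit (1 - M).det) :
    G⁻¹ * (D * (1 - M)⁻¹ - 1) = F * (1 - M)⁻¹ := by
  have h : D * (1 - M)⁻¹ - 1 = G * (F * (1 - M)⁻¹) := by
    calc D * (1 - M)⁻¹ - 1 = (D - (1 - M)) * (1 - M)⁻¹ := by
          rw [sub_mul, mul_nonsing_inv _ h1M]
      _ = G * (F * (1 - M)⁻¹) := by rw [hM, ← Matrix.mul_assoc]; congr 1; abel
  rw [h, ← Matrix.mul_assoc, nonsing_inv_mul _ hG, Matrix.one_mul]

theorem diagonal_add_diagonal_mul_one_sub (a b : ι → K) :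
    diagonal a + diagonal b * (1 - diagonal a) = diagonal fun i => a i + b i * (1 - a i) := by
  rw [← diagonal_one, diagonal_sub, diagonal_mul_diagonal, diagonal_add]

end Algebra

end Matrix

section SDIR

variable {n : ℕ}

theorem Bdel_nonneg {B : Matrix (Fin n) (Fin n) ℝ} (hB : ∀ i j, 0 ≤ B i j)
    (P : Finset (Fin n × Fin n)) (i j : Fin n) : 0 ≤ Bdel B P i j := by
  rw [Bdel, of_apply]
  split_ifs
  exacts [le_rfl, hB i j]

theorem spectralRadius_map_ofReal_lt_one {M : Matrix (Fin n) (Fin n) ℝ} (h : specRad M < 1) :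
    spectralRadius ℂ (M.map Complex.ofReal) < 1 := by
  have hbdd :
      BddAbove {r : ℝ | ∃ μ : ℂ, μ ∈ spectrum ℂ (M.map Complex.ofReal) ∧ r = ‖μ‖} := by
    refine ((finite_spectrum (M.map Complex.ofReal)).image (‖·‖)).bddAbove.mono ?_
    rintro _ ⟨μ, hμ, rfl⟩
    exact ⟨μ, hμ, rfl⟩
  refine lt_of_le_of_lt (iSup₂_le fun μ hμ => ?_) (ENNReal.ofReal_lt_one.mpr h)
  rw [← ENNReal.ofReal_coe_nnreal, coe_nnnorm]
  exact ENNReal.ofReal_le_ofReal (le_csSup hbdd ⟨μ, hμ, rfl⟩)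

section LinftyOpNorm

attribute [local instance] Matrix.linftyOpNormedRing Matrix.linftyOpNormedAlgebra

theorem summable_pow_of_specRad_lt_one {M : Matrix (Fin n) (Fin n) ℝ} (h : specRad M < 1) :
    Summable (M ^ ·) := by
  have hc : Summable (fun k => M.map Complex.ofReal ^ k) :=
    (summable_norm_pow_of_spectralRadius_lt_one (spectralRadius_map_ofReal_lt_one h)).of_norm
  refine Pi.summable.mpr fun i => Pi.summable.mpr fun j => ?_
  have hij : Summable fun k => (M.map Complex.ofReal ^ k) i j :=
    Pi.summable.mp (Pi.summable.mp hc i) j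
  have hpow : ∀ k, (M.map Complex.ofReal ^ k) i j = ((M ^ k) i j : ℂ) := fun k =>
    congrFun (congrFun (Matrix.map_pow M Complex.ofRealHom k).symm i) j
  exact Complex.summable_ofReal.mp (by simpa only [hpow] using hij)

end LinftyOpNorm

theorem isUnit_det_one_sub_of_specRad_lt_one {M : Matrix (Fin n) (Fin n) ℝ}
    (h : specRad M < 1) : IsUnit (1 - M).det :=
  Matrix.isUnit_det_of_right_inverse (mul_neg_geom_series_of_summable
    (summable_pow_of_specRad_lt_one h))

theorem hasSum_pow_inv_one_sub_of_specRad_lt_one {M : Matrix (Fin n) (Fin n) ℝ}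
    (h : specRad M < 1) : HasSum (M ^ ·) (1 - M)⁻¹ := by
  have hs := summable_pow_of_specRad_lt_one h
  rw [Matrix.inv_eq_right_inv (mul_neg_geom_series_of_summable hs)]
  exact hs.hasSum

theorem sum_range_pow_mulVec_le_of_specRad_lt_one {M : Matrix (Fin n) (Fin n) ℝ}
    (hM : ∀ i j, 0 ≤ M i j) (h : specRad M < 1) {v : Fin n → ℝ} (hv : 0 ≤ v) (t : ℕ) :
    ∑ u ∈ range t, M ^ u *ᵥ v ≤ (1 - M)⁻¹ *ᵥ v :=
  sum_le_hasSum _ (fun u _ => Matrix.pow_mulVec_nonneg hM hv u)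
    ((hasSum_pow_inv_one_sub_of_specRad_lt_one h).map (Matrix.mulVec.addMonoidHomLeft v)
      (Continuous.matrix_mulVec continuous_id continuous_const))

theorem sum_abs_sub_le_of_increments {M F : Matrix (Fin n) (Fin n) ℝ} {m x : ℕ → Fin n → ℝ}
    {z₀ : Fin n → ℝ} (hM : ∀ i j, 0 ≤ M i j) (hρ : specRad M < 1) (hF : ∀ i j, 0 ≤ F i j)
    (hx : ∀ u, 0 ≤ x u) (hxz : ∀ u, x u ≤ M ^ u *ᵥ z₀) (hm : ∀ u, m (u + 1) = m u + F *ᵥ x u)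
    (t : ℕ) : ∑ i, |m t i - m 0 i| ≤ (fun _ => (1 : ℝ)) ⬝ᵥ (F * (1 - M)⁻¹) *ᵥ z₀ := by
  have hz₀ : 0 ≤ z₀ := by simpa using (hx 0).trans (hxz 0)
  have hinc : m t - m 0 = F *ᵥ ∑ u ∈ range t, x u := by
    rw [Matrix.mulVec_sum, ← Finset.sum_range_sub]
    simp only [hm, add_sub_cancel_left]
  have hinc_le : m t - m 0 ≤ F *ᵥ ((1 - M)⁻¹ *ᵥ z₀) :=
    hinc ▸ Matrix.mulVec_mono_of_nonneg hF ((Finset.sum_le_sum fun u _ => hxz u).trans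
      (sum_range_pow_mulVec_le_of_specRad_lt_one hM hρ hz₀ t))
  have hinc_nonneg : 0 ≤ m t - m 0 :=
    hinc ▸ Matrix.mulVec_nonneg_of_nonneg hF (Finset.sum_nonneg fun u _ => hx u)
  calc ∑ i, |m t i - m 0 i| = (fun _ => (1 : ℝ)) ⬝ᵥ (m t - m 0) := by
        simp only [dotProduct, one_mul, Pi.sub_apply]
        exact Finset.sum_congr rfl fun i _ => abs_of_nonneg (hinc_nonneg i)
    _ ≤ (fun _ => (1 : ℝ)) ⬝ᵥ (F * (1 - M)⁻¹) *ᵥ z₀ := by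
        rw [← Matrix.mulVec_mulVec]
        exact dotProduct_le_dotProduct_of_nonneg_left hinc_le fun _ => zero_le_one

theorem sdir_total_step {ι R : Type*} [Fintype ι] [DecidableEq ι] [CommRing R]
    (A W D D' S F : Matrix ι ι R) (x y r : ι → R) :
    ((1 - D + A * S * F) *ᵥ x + W *ᵥ y) + (((1 - A) * S * F) *ᵥ x + (1 - W - D') *ᵥ y) +
      (D *ᵥ x + D' *ᵥ y + r) = x + y + r + (S * F) *ᵥ x := by
  simp only [Matrix.mul_assoc, Matrix.add_mulVec, Matrix.sub_mulVec, Matrix.one_mulVec,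
    ← Matrix.mulVec_mulVec]
  abel

theorem sdir_weighted_step_le {α ω δ δ' s q : Fin n → ℝ} {F : Matrix (Fin n) (Fin n) ℝ}
    (hα : ∀ i, 0 ≤ α i ∧ α i ≤ 1) (hs : ∀ i, 0 ≤ s i) (hF : ∀ i j, 0 ≤ F i j)
    (hq : ∀ i, 0 < q i) (hqδ : ∀ i, δ i ≤ δ' i + (1 - 1 / q i) * ω i)
    (x : Fin n → ℝ) {y : Fin n → ℝ} (hy : 0 ≤ y) :
    ((1 - diagonal δ + diagonal α * diagonal s * F) *ᵥ x + diagonal ω *ᵥ y) +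
        diagonal q *ᵥ (((1 - diagonal α) * diagonal s * F) *ᵥ x +
          (1 - diagonal ω - diagonal δ') *ᵥ y) ≤
      (1 - diagonal δ + diagonal (fun i => α i + q i * (1 - α i)) * (diagonal s * F)) *ᵥ
        (x + diagonal q *ᵥ y) := by
  intro i
  have hqy : 0 ≤ diagonal q *ᵥ y := fun j => by
    rw [mulVec_diagonal]; exact mul_nonneg (hq j).le (hy j)
  have hFqy := Matrix.mulVec_nonneg_of_nonneg hF hqy i
  have hgs : 0 ≤ (α i + q i * (1 - α i)) * s i := by
    have := (hα i).1; have := (hα i).2; have := (hq i).le; have := hs i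
    positivity
  have hdecay : ω i + q i * (1 - ω i - δ' i) ≤ (1 - δ i) * q i := by
    have h := mul_le_mul_of_nonneg_left (hqδ i) (hq i).le
    rw [mul_add, ← mul_assoc, mul_sub, mul_one, mul_one_div_cancel (hq i).ne'] at h
    linarith
  simp only [Matrix.mul_assoc, Pi.add_apply, Matrix.add_mulVec, Matrix.sub_mulVec,
    Matrix.one_mulVec, ← Matrix.mulVec_mulVec, Matrix.mulVec_add, Pi.sub_apply,
    mulVec_diagonal] at hFqy ⊢
  nlinarith [mul_nonneg hgs hFqy, mul_nonneg (sub_nonneg.mpr hdecay) (hy i)]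

end SDIR

theorem sdir_upper_bound_general
    (n : ℕ) (α ω δ δ' s : Fin n → ℝ)
    (hα : ∀ i, 0 ≤ α i ∧ α i ≤ 1)
    (hδ : ∀ i, 0 ≤ δ i ∧ δ i ≤ 1)
    (hs : ∀ i, 0 ≤ s i ∧ s i ≤ 1)
    (B : Matrix (Fin n) (Fin n) ℝ) (hB : ∀ i j, 0 ≤ B i j)
    (P : Finset (Fin n × Fin n))
    (q : Fin n → ℝ) (hq : ∀ i, 0 < q i ∧ q i ≤ 1)
    (hqδ : ∀ i, δ i ≤ δ' i + (1 - 1 / q i) * ω i)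
    (hρ : specRad
      (1 - Matrix.diagonal (fun i => min (δ i) (δ' i + (1 - 1 / q i) * ω i)) +
        (Matrix.diagonal α + Matrix.diagonal q * (1 - Matrix.diagonal α)) *
          Matrix.diagonal s * Bdel B P) < 1)
    (x y r : ℕ → Fin n → ℝ)
    (hx : ∀ t i, 0 ≤ x t i) (hy : ∀ t i, 0 ≤ y t i)
    (hdynx : ∀ t, x (t + 1) =
      (1 - Matrix.diagonal δ + Matrix.diagonal α * Matrix.diagonal s * Bdel B P) *ᵥ x t +
        Matrix.diagonal ω *ᵥ y t)
    (hdyny : ∀ t, y (t + 1) =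
      ((1 - Matrix.diagonal α) * Matrix.diagonal s * Bdel B P) *ᵥ x t +
        (1 - Matrix.diagonal ω - Matrix.diagonal δ') *ᵥ y t)
    (hdynr : ∀ t, r (t + 1) =
      Matrix.diagonal δ *ᵥ x t + Matrix.diagonal δ' *ᵥ y t + r t)
    (m : ℕ → Fin n → ℝ) (hm : ∀ t, m t = x t + y t + r t) :
    ∀ t, ∑ i, |m t i - m 0 i| ≤
      (fun _ => (1 : ℝ)) ⬝ᵥ
        ((Matrix.diagonal α + Matrix.diagonal q * (1 - Matrix.diagonal α))⁻¹ *
          (Matrix.diagonal δ *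
            (1 - (1 - Matrix.diagonal (fun i => min (δ i) (δ' i + (1 - 1 / q i) * ω i)) +
              (Matrix.diagonal α + Matrix.diagonal q * (1 - Matrix.diagonal α)) *
                Matrix.diagonal s * Bdel B P))⁻¹ - 1)) *ᵥ
          (x 0 + Matrix.diagonal q *ᵥ y 0) := by
  intro t
  have hC : (fun i => min (δ i) (δ' i + (1 - 1 / q i) * ω i)) = δ :=
    funext fun i => min_eq_left (hqδ i)
  rw [hC, diagonal_add_diagonal_mul_one_sub, Matrix.mul_assoc (diagonal _)] at hρ ⊢
  set g : Fin n → ℝ := fun i => α i + q i * (1 - α i)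
  set F := diagonal s * Bdel B P
  set M := 1 - diagonal δ + diagonal g * F with hM
  have hg : ∀ i, 0 < g i := fun i => by
    nlinarith [(hq i).1, mul_nonneg (hα i).1 (sub_nonneg.mpr (hq i).2)]
  have hG : IsUnit (diagonal g).det := by
    rw [det_diagonal]; exact (Finset.prod_pos fun i _ => hg i).ne'.isUnit
  have hF : ∀ i j, 0 ≤ F i j := diagonal_mul_nonneg (fun i => (hs i).1) (Bdel_nonneg hB P)
  have hM0 : ∀ i j, 0 ≤ M i j :=
    one_sub_diagonal_add_diagonal_mul_nonneg (fun i => (hδ i).2) (fun i => (hg i).le) hF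
  have hz : ∀ u, x u + diagonal q *ᵥ y u ≤ M ^ u *ᵥ (x 0 + diagonal q *ᵥ y 0) :=
    le_pow_mulVec_of_le_mulVec hM0 fun u => by
      rw [hdynx, hdyny]
      exact sdir_weighted_step_le hα (fun i => (hs i).1) (Bdel_nonneg hB P) (fun i => (hq i).1)
        hqδ _ (hy u)
  have hqy : ∀ u, 0 ≤ diagonal q *ᵥ y u := fun u j => by
    rw [mulVec_diagonal]; exact mul_nonneg (hq j).1.le (hy u j)
  have hmass : ∀ u, m (u + 1) = m u + F *ᵥ x u := fun u => by
    rw [hm, hm, hdynx, hdyny, hdynr, sdir_total_step]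
  rw [inv_mul_mul_inv_one_sub_sub_one hM hG (isUnit_det_one_sub_of_specRad_lt_one hρ)]
  exact sum_abs_sub_le_of_increments hM0 hρ hF (fun u => hx u)
    (fun u => (le_add_of_nonneg_right (hqy u)).trans (hz u)) hmass t

/-- Theorem 2: supermodular upper bound on the infection amount after deleting
the edge set `P`:  `sup_t ‖m(t) − m(0)‖₁ ≤ σᵁ(P)`. -/
theorem sdir_upper_bound
    (n : ℕ) (hn : 1 ≤ n) (α ω δ δ' s : Fin n → ℝ)
    (hα : ∀ i, 0 ≤ α i ∧ α i ≤ 1) (hω : ∀ i, 0 ≤ ω i ∧ ω i ≤ 1)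
    (hδ : ∀ i, 0 ≤ δ i ∧ δ i ≤ 1) (hδ' : ∀ i, 0 ≤ δ' i ∧ δ' i ≤ 1)
    (hs : ∀ i, 0 ≤ s i ∧ s i ≤ 1) (hωδ' : ∀ i, ω i + δ' i ≤ 1)
    (B : Matrix (Fin n) (Fin n) ℝ) (hB : ∀ i j, 0 ≤ B i j)
    (P : Finset (Fin n × Fin n))
    (q : Fin n → ℝ) (hq : ∀ i, 0 < q i ∧ q i ≤ 1)
    (hqδ : ∀ i, δ i ≤ δ' i + (1 - 1 / q i) * ω i)
    (hρ : specRad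
      (1 - Matrix.diagonal (fun i => min (δ i) (δ' i + (1 - 1 / q i) * ω i)) +
        (Matrix.diagonal α + Matrix.diagonal q * (1 - Matrix.diagonal α)) *
          Matrix.diagonal s * Bdel B P) < 1)
    (x y r : ℕ → Fin n → ℝ)
    (hx : ∀ t i, 0 ≤ x t i) (hy : ∀ t i, 0 ≤ y t i) (hr : ∀ t i, 0 ≤ r t i)
    (hdynx : ∀ t, x (t + 1) =
      (1 - Matrix.diagonal δ + Matrix.diagonal α * Matrix.diagonal s * Bdel B P) *ᵥ x t +
        Matrix.diagonal ω *ᵥ y t)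
    (hdyny : ∀ t, y (t + 1) =
      ((1 - Matrix.diagonal α) * Matrix.diagonal s * Bdel B P) *ᵥ x t +
        (1 - Matrix.diagonal ω - Matrix.diagonal δ') *ᵥ y t)
    (hdynr : ∀ t, r (t + 1) =
      Matrix.diagonal δ *ᵥ x t + Matrix.diagonal δ' *ᵥ y t + r t)
    (m : ℕ → Fin n → ℝ) (hm : ∀ t, m t = x t + y t + r t) :
    ∀ t, ∑ i, |m t i - m 0 i| ≤
      (fun _ => (1 : ℝ)) ⬝ᵥ
        ((Matrix.diagonal α + Matrix.diagonal q * (1 - Matrix.diagonal α))⁻¹ *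
          (Matrix.diagonal δ *
            (1 - (1 - Matrix.diagonal (fun i => min (δ i) (δ' i + (1 - 1 / q i) * ω i)) +
              (Matrix.diagonal α + Matrix.diagonal q * (1 - Matrix.diagonal α)) *
                Matrix.diagonal s * Bdel B P))⁻¹ - 1)) *ᵥ
          (x 0 + Matrix.diagonal q *ᵥ y 0) :=
  sdir_upper_bound_general n α ω δ δ' s hα hδ hs B hB P q hq hqδ hρ x y r hx hy hdynx hdyny hdynr m
    hm
end

section
/- Assume α_i ∈ (0,1] and ω_i + δ'_i > 0 for every i, fix nonnegative initial vectors x(0), y(0) ∈ ℝⁿ, and let Q ⊆ {1,…,n}×{1,…,n} be a candidate edge set such that ρ(N_{−P}) < 1 for every P ⊆ Q. Then the set function P ↦ σ^L(P) = 1ᵀ·A^{−1}·(D·(I − N_{−P})^{−1} − I)·(x(0) + W·(W + D')^{−1}·y(0)) is non-increasing: for all P ⊆ P' ⊆ Q one has σ^L(P') ≤ σ^L(P). (First part of Lemma 2.) -/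
/-!
Deleting edges can only decrease the entries of the nonnegative matrix `N₋ₚ`. If `ρ(N) < 1`,
Gelfand's formula gives `Nᵐ → 0`, so `(I − N)⁻¹ = ∑ₖ Nᵏ` is entrywise nonnegative, and the
resolvent identity `(I − N)⁻¹ − (I − N')⁻¹ = (I − N')⁻¹ (N − N') (I − N)⁻¹` makes it entrywise
monotone in `N`. As `A⁻¹` and `D` are nonnegative diagonal matrices and
`x(0) + W (W + D')⁻¹ y(0)` is a nonnegative vector, `σᴸ` is monotone in `(I − N₋ₚ)⁻¹`, hence
non-increasing in `P`.
-/

open Matrix Filter Finset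

/-- The lower-bound set function
`σᴸ(P) = 1ᵀ·A⁻¹·(D·(I − N₋ₚ)⁻¹ − I)·(x0 + W·(W + D')⁻¹·y0)`. -/
noncomputable def sigmaL {n : ℕ} (α ω δ δ' s x0 y0 : Fin n → ℝ)
    (B : Matrix (Fin n) (Fin n) ℝ) (P : Finset (Fin n × Fin n)) : ℝ :=
  (fun _ => (1 : ℝ)) ⬝ᵥ
    ((Matrix.diagonal α)⁻¹ *
      (Matrix.diagonal δ *
        (1 - (1 - Matrix.diagonal δ +
          Matrix.diagonal α * Matrix.diagonal s * Bdel B P))⁻¹ - 1)) *ᵥ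
      (x0 + (Matrix.diagonal ω * (Matrix.diagonal ω + Matrix.diagonal δ')⁻¹) *ᵥ y0)

open Topology

theorem tendsto_pow_nhds_zero_of_spectralRadius_lt_one {A : Type*} [NormedRing A]
    [NormedAlgebra ℂ A] [CompleteSpace A] {a : A} (h : spectralRadius ℂ a < 1) :
    Tendsto (fun m => a ^ m) atTop (𝓝 0) := by
  obtain ⟨r, hρr, hr1⟩ := exists_between h
  lift r to NNReal using hr1.ne_top
  have hbound : ∀ᶠ m : ℕ in atTop, ‖a ^ m‖ ≤ (r : ℝ) ^ m := by
    filter_upwards [(spectrum.pow_nnnorm_pow_one_div_tendsto_nhds_spectralRadius a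
      ).eventually_lt_const hρr, eventually_ne_atTop 0] with m hm hm0
    rw [one_div, ENNReal.rpow_inv_lt_iff (by positivity), ENNReal.rpow_natCast] at hm
    exact_mod_cast hm.le
  exact squeeze_zero_norm' hbound
    (tendsto_pow_atTop_nhds_zero_of_lt_one r.2 (by exact_mod_cast hr1))

theorem spectralRadius_map_ofReal_le_specRad {n : ℕ} (M : Matrix (Fin n) (Fin n) ℝ) :
    spectralRadius ℂ (M.map Complex.ofReal) ≤ ENNReal.ofReal (specRad M) := by
  have hbdd : BddAbove {r : ℝ | ∃ μ : ℂ, μ ∈ spectrum ℂ (M.map Complex.ofReal) ∧ r = ‖μ‖} :=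
    ((M.map Complex.ofReal).finite_spectrum.image (‖·‖)).bddAbove.mono
      fun _ ⟨μ, hμ, hr⟩ => hr ▸ Set.mem_image_of_mem _ hμ
  refine iSup₂_le fun μ hμ => ?_
  rw [← ENNReal.ofReal_coe_nnreal, coe_nnnorm]
  exact ENNReal.ofReal_le_ofReal (le_csSup hbdd ⟨μ, hμ, rfl⟩)

theorem tendsto_pow_nhds_zero_of_specRad_lt_one {n : ℕ} {M : Matrix (Fin n) (Fin n) ℝ}
    (h : specRad M < 1) : Tendsto (fun m => M ^ m) atTop (𝓝 0) := by
  -- Any algebra norm on the complexified matrices will do: Gelfand's formula needs one.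
  let := Matrix.linftyOpNormedRing (n := Fin n) (α := ℂ)
  let := Matrix.linftyOpNormedAlgebra (n := Fin n) (R := ℂ) (α := ℂ)
  have : CompleteSpace (Matrix (Fin n) (Fin n) ℂ) := FiniteDimensional.complete ℂ _
  have hρ : spectralRadius ℂ (M.map Complex.ofReal) < 1 :=
    (spectralRadius_map_ofReal_le_specRad M).trans_lt (ENNReal.ofReal_lt_one.mpr h)
  have hre : ∀ m : ℕ, (M.map Complex.ofReal ^ m).map Complex.re = M ^ m := fun m => by
    rw [show M.map Complex.ofReal = Complex.ofRealHom.mapMatrix M from rfl, ← map_pow]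
    ext; simp
  simpa [Function.comp_def, hre] using
    ((continuous_id.matrix_map Complex.continuous_re).tendsto 0).comp
      (tendsto_pow_nhds_zero_of_spectralRadius_lt_one hρ)

namespace Matrix

variable {ι : Type*} [Fintype ι]

theorem mul_apply_nonneg {R : Type*} [Semiring R] [PartialOrder R] [IsOrderedRing R]
    {M N : Matrix ι ι R} (hM : ∀ i j, 0 ≤ M i j) (hN : ∀ i j, 0 ≤ N i j) (i j : ι) :
    0 ≤ (M * N) i j :=
  sum_nonneg fun k _ => mul_nonneg (hM i k) (hN k j)

theorem dotProduct_mulVec_le_of_apply_le {m R : Type*} [Fintype m]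
    [Semiring R] [PartialOrder R] [IsOrderedRing R] {u : m → R} {v : ι → R}
    {X Y : Matrix m ι R} (hu : ∀ i, 0 ≤ u i) (hv : ∀ j, 0 ≤ v j) (h : ∀ i j, X i j ≤ Y i j) :
    u ⬝ᵥ X *ᵥ v ≤ u ⬝ᵥ Y *ᵥ v := by
  simp only [dotProduct, mulVec]
  gcongr with i _ j _
  exacts [hu i, hv j, h i j]

theorem inv_diagonal_of_ne_zero [DecidableEq ι] {K : Type*} [Field K]
    {d : ι → K} (hd : ∀ i, d i ≠ 0) : (diagonal d)⁻¹ = diagonal fun i => (d i)⁻¹ :=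
  inv_eq_left_inv <| by simp [inv_mul_cancel₀ (hd _)]

variable [DecidableEq ι] {M M' : Matrix ι ι ℝ}

theorem isUnit_det_one_sub_of_tendsto_pow (h : Tendsto (fun m => M ^ m) atTop (𝓝 0)) :
    IsUnit (1 - M).det := by
  -- `det (1 - M ^ m) → 1`, but `det (1 - M ^ m) = det (∑ k < m, M ^ k) * det (1 - M)`.
  rw [isUnit_iff_ne_zero]
  intro hdet
  have hlim : Tendsto (fun m => (1 - M ^ m).det) atTop (𝓝 (1 - 0 : Matrix ι ι ℝ).det) :=
    ((continuous_id.matrix_det).tendsto _).comp (tendsto_const_nhds.sub h)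
  have hzero : ∀ m, (1 - M ^ m).det = 0 := fun m => by
    rw [← geom_sum_mul_neg, det_mul, hdet, mul_zero]
  simp only [hzero, sub_zero, det_one] at hlim
  exact zero_ne_one (tendsto_nhds_unique tendsto_const_nhds hlim)

theorem tendsto_geom_sum_inv_one_sub (h : Tendsto (fun m => M ^ m) atTop (𝓝 0)) :
    Tendsto (fun m => ∑ k ∈ range m, M ^ k) atTop (𝓝 (1 - M)⁻¹) := by
  have hsum : ∀ m, ∑ k ∈ range m, M ^ k = (1 - M ^ m) * (1 - M)⁻¹ := fun m => by
    rw [← geom_sum_mul_neg, mul_assoc, mul_nonsing_inv _ (isUnit_det_one_sub_of_tendsto_pow h),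
      mul_one]
  simpa [hsum] using ((tendsto_const_nhds (x := (1 : Matrix ι ι ℝ))).sub h).mul_const (1 - M)⁻¹

theorem inv_one_sub_apply_nonneg (hM : ∀ i j, 0 ≤ M i j)
    (h : Tendsto (fun m => M ^ m) atTop (𝓝 0)) (i j : ι) : 0 ≤ (1 - M)⁻¹ i j :=
  ge_of_tendsto' (((continuous_apply_apply i j).tendsto _).comp (tendsto_geom_sum_inv_one_sub h))
    fun m => show 0 ≤ (∑ k ∈ range m, M ^ k) i j by
      rw [sum_apply]; exact sum_nonneg fun k _ => pow_apply_nonneg hM k i j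

theorem inv_one_sub_apply_le (hM' : ∀ i j, 0 ≤ M' i j) (hle : ∀ i j, M' i j ≤ M i j)
    (h : Tendsto (fun m => M ^ m) atTop (𝓝 0)) (h' : Tendsto (fun m => M' ^ m) atTop (𝓝 0))
    (i j : ι) : (1 - M')⁻¹ i j ≤ (1 - M)⁻¹ i j := by
  have hM : ∀ i j, 0 ≤ M i j := fun i j => (hM' i j).trans (hle i j)
  have hresolvent : (1 - M)⁻¹ - (1 - M')⁻¹ = (1 - M')⁻¹ * (M - M') * (1 - M)⁻¹ := by
    rw [show M - M' = (1 - M') - (1 - M) by abel, mul_sub, sub_mul,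
      nonsing_inv_mul _ (isUnit_det_one_sub_of_tendsto_pow h'), one_mul, mul_assoc,
      mul_nonsing_inv _ (isUnit_det_one_sub_of_tendsto_pow h), mul_one]
  have hdiff := mul_apply_nonneg
    (mul_apply_nonneg (N := M - M') (inv_one_sub_apply_nonneg hM' h')
      fun i j => sub_nonneg.mpr (hle i j))
    (inv_one_sub_apply_nonneg hM h) i j
  rw [← hresolvent, sub_apply, sub_nonneg] at hdiff
  exact hdiff

end Matrix

noncomputable def Ndel {n : ℕ} (α δ s : Fin n → ℝ) (B : Matrix (Fin n) (Fin n) ℝ)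
    (P : Finset (Fin n × Fin n)) : Matrix (Fin n) (Fin n) ℝ :=
  1 - diagonal δ + diagonal α * diagonal s * Bdel B P

section Deletion

variable {n : ℕ} {α δ s : Fin n → ℝ} {B : Matrix (Fin n) (Fin n) ℝ} {P P' : Finset (Fin n × Fin n)}

theorem Bdel_apply_nonneg (hB : ∀ i j, 0 ≤ B i j) (P : Finset (Fin n × Fin n)) (i j : Fin n) :
    0 ≤ Bdel B P i j := by
  rw [Bdel, of_apply]
  split_ifs
  exacts [le_rfl, hB i j]

theorem Bdel_apply_anti (hB : ∀ i j, 0 ≤ B i j) (hPP' : P ⊆ P') (i j : Fin n) :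
    Bdel B P' i j ≤ Bdel B P i j := by
  rw [Bdel, Bdel, of_apply, of_apply]
  split_ifs with h' h h
  exacts [le_rfl, hB i j, absurd (hPP' h) h', le_rfl]

theorem Ndel_apply (i j : Fin n) :
    Ndel α δ s B P i j = (if i = j then 1 - δ i else 0) + α i * s i * Bdel B P i j := by
  by_cases h : i = j <;> simp [Ndel, h, one_apply, diagonal_mul_diagonal, diagonal_mul]

theorem Ndel_apply_nonneg (hα : ∀ i, 0 ≤ α i) (hδ : ∀ i, δ i ≤ 1) (hs : ∀ i, 0 ≤ s i)
    (hB : ∀ i j, 0 ≤ B i j) (P : Finset (Fin n × Fin n)) (i j : Fin n) :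
    0 ≤ Ndel α δ s B P i j := by
  have hdel : 0 ≤ α i * s i * Bdel B P i j :=
    mul_nonneg (mul_nonneg (hα i) (hs i)) (Bdel_apply_nonneg hB P i j)
  rw [Ndel_apply]
  split_ifs
  · linarith [hδ i]
  · linarith

theorem Ndel_apply_anti (hα : ∀ i, 0 ≤ α i) (hs : ∀ i, 0 ≤ s i) (hB : ∀ i j, 0 ≤ B i j)
    (hPP' : P ⊆ P') (i j : Fin n) : Ndel α δ s B P' i j ≤ Ndel α δ s B P i j := by
  rw [Ndel_apply, Ndel_apply]
  gcongr
  · exact mul_nonneg (hα i) (hs i)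
  · exact Bdel_apply_anti hB hPP' i j

end Deletion

theorem sigmaL_nonincreasing_general
    (n : ℕ) (α ω δ δ' s : Fin n → ℝ)
    (hα : ∀ i, 0 < α i ∧ α i ≤ 1) (hω : ∀ i, 0 ≤ ω i ∧ ω i ≤ 1)
    (hδ : ∀ i, 0 ≤ δ i ∧ δ i ≤ 1)
    (hs : ∀ i, 0 ≤ s i ∧ s i ≤ 1)
    (hωδ'pos : ∀ i, 0 < ω i + δ' i)
    (B : Matrix (Fin n) (Fin n) ℝ) (hB : ∀ i j, 0 ≤ B i j)
    (x0 y0 : Fin n → ℝ) (hx0 : ∀ i, 0 ≤ x0 i) (hy0 : ∀ i, 0 ≤ y0 i)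
    (Qc : Finset (Fin n × Fin n))
    (hρ : ∀ P ⊆ Qc, specRad
      (1 - Matrix.diagonal δ + Matrix.diagonal α * Matrix.diagonal s * Bdel B P) < 1) :
    ∀ P P' : Finset (Fin n × Fin n), P ⊆ P' → P' ⊆ Qc →
      sigmaL α ω δ δ' s x0 y0 B P' ≤ sigmaL α ω δ δ' s x0 y0 B P := by
  intro P P' hPP' hP'Q
  have hα₀ : ∀ i, 0 ≤ α i := fun i => (hα i).1.le
  have hs₀ : ∀ i, 0 ≤ s i := fun i => (hs i).1
  have hX : ∀ i j, (1 - Ndel α δ s B P')⁻¹ i j ≤ (1 - Ndel α δ s B P)⁻¹ i j :=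
    inv_one_sub_apply_le (Ndel_apply_nonneg hα₀ (fun i => (hδ i).2) hs₀ hB P')
      (Ndel_apply_anti hα₀ hs₀ hB hPP')
      (tendsto_pow_nhds_zero_of_specRad_lt_one (hρ P (hPP'.trans hP'Q)))
      (tendsto_pow_nhds_zero_of_specRad_lt_one (hρ P' hP'Q))
  have hv : ∀ i, 0 ≤ (x0 + (diagonal ω * (diagonal ω + diagonal δ')⁻¹) *ᵥ y0) i := fun i => by
    rw [diagonal_add, inv_diagonal_of_ne_zero fun i => (hωδ'pos i).ne', diagonal_mul_diagonal,
      Pi.add_apply, mulVec_diagonal]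
    exact add_nonneg (hx0 i)
      (mul_nonneg (mul_nonneg (hω i).1 (inv_nonneg.mpr (hωδ'pos i).le)) (hy0 i))
  refine dotProduct_mulVec_le_of_apply_le (fun _ => zero_le_one) hv fun i j => ?_
  rw [inv_diagonal_of_ne_zero fun i => (hα i).1.ne', diagonal_mul, diagonal_mul, Matrix.sub_apply,
    Matrix.sub_apply, diagonal_mul, diagonal_mul]
  gcongr
  exacts [inv_nonneg.mpr (hα₀ i), (hδ i).1, hX i j]

/-- Lemma 2 (first part): `σᴸ` is non-increasing on subsets of the candidate set. -/
theorem sigmaL_nonincreasing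
    (n : ℕ) (hn : 1 ≤ n) (α ω δ δ' s : Fin n → ℝ)
    (hα : ∀ i, 0 < α i ∧ α i ≤ 1) (hω : ∀ i, 0 ≤ ω i ∧ ω i ≤ 1)
    (hδ : ∀ i, 0 ≤ δ i ∧ δ i ≤ 1) (hδ' : ∀ i, 0 ≤ δ' i ∧ δ' i ≤ 1)
    (hs : ∀ i, 0 ≤ s i ∧ s i ≤ 1) (hωδ' : ∀ i, ω i + δ' i ≤ 1)
    (hωδ'pos : ∀ i, 0 < ω i + δ' i)
    (B : Matrix (Fin n) (Fin n) ℝ) (hB : ∀ i j, 0 ≤ B i j)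
    (x0 y0 : Fin n → ℝ) (hx0 : ∀ i, 0 ≤ x0 i) (hy0 : ∀ i, 0 ≤ y0 i)
    (Qc : Finset (Fin n × Fin n))
    (hρ : ∀ P ⊆ Qc, specRad
      (1 - Matrix.diagonal δ + Matrix.diagonal α * Matrix.diagonal s * Bdel B P) < 1) :
    ∀ P P' : Finset (Fin n × Fin n), P ⊆ P' → P' ⊆ Qc →
      sigmaL α ω δ δ' s x0 y0 B P' ≤ sigmaL α ω δ δ' s x0 y0 B P :=
  sigmaL_nonincreasing_general n α ω δ δ' s hα hω hδ hs hωδ'pos B hB x0 y0 hx0 hy0 Qc hρ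
end
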